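/- Let ρ = ∑_j μ_j (|ζ_j⟩⟨ζ_j|)^{⊗2} be a 4-qubit state where each |ζ_j⟩ = α_j|Φ⁻⟩ + β_j e^{iθ_j}|Ψ⁺⟩ with α_j, β_j ∈ [0,1], α_j²+β_j² = 1, θ_j ∈ [0,2π), and ∑_j μ_j = 1, μ_j ≥ 0. Then the trace distance between the reduced state of ρ on the first qubit of each pair (tracing out the second and fourth qubits) and the two-qubit maximally mixed state (I/2)^{⊗2} is at least 2 ∑_j μ_j α_j² β_j² sin²θ_j. -/

import Mathlib

open Matrix
open Kronecker
open scoped ComplexOrder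

/-- The trace norm `‖A‖₁ = tr √(A†A)` of a complex matrix. -/
noncomputable def traceNorm {m : Type*} [Fintype m] [DecidableEq m]
    (A : Matrix m m ℂ) : ℝ :=
  (((Matrix.posSemidef_conjTranspose_mul_self A).1.eigenvectorUnitary.1 *
      Matrix.diagonal (((↑) : ℝ → ℂ) ∘ Real.sqrt ∘ (Matrix.posSemidef_conjTranspose_mul_self A).1.eigenvalues) *
      (star (Matrix.posSemidef_conjTranspose_mul_self A).1.eigenvectorUnitary : Matrix m m ℂ)).trace).re

/-- The trace distance `D(ρ, σ) = ½‖ρ − σ‖₁`. -/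
noncomputable def traceDist {m : Type*} [Fintype m] [DecidableEq m]
    (A B : Matrix m m ℂ) : ℝ := traceNorm (A - B) / 2

/-- Partial trace over the registers `S'₁, S'₂` of a state on
`(S₁, S'₁, S₂, S'₂)`, yielding the reduced state on `(S₁, S₂)`. -/
noncomputable def reduce
    (ρ : Matrix ((Fin 2 × Fin 2) × (Fin 2 × Fin 2)) ((Fin 2 × Fin 2) × (Fin 2 × Fin 2)) ℂ) :
    Matrix (Fin 2 × Fin 2) (Fin 2 × Fin 2) ℂ :=
  fun p q => ∑ s : Fin 2, ∑ t : Fin 2, ρ ((p.1, s), (p.2, t)) ((q.1, s), (q.2, t))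

/-- The computational basis state `|ij⟩` of two qubits. -/
def ket (i j : Fin 2) : Fin 2 × Fin 2 → ℂ := fun p => if p = (i, j) then 1 else 0

/-- The Bell state `|Φ⁻⟩ = (|00⟩−|11⟩)/√2`. -/
noncomputable def PhiMinus : Fin 2 × Fin 2 → ℂ :=
  ((Real.sqrt 2 : ℂ))⁻¹ • (ket 0 0 - ket 1 1)

/-- The Bell state `|Ψ⁺⟩ = (|01⟩+|10⟩)/√2`. -/
noncomputable def PsiPlus : Fin 2 × Fin 2 → ℂ :=
  ((Real.sqrt 2 : ℂ))⁻¹ • (ket 0 1 + ket 1 0)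

/-!
Tracing out the second qubit of `|ζ_j⟩⟨ζ_j|` leaves `I/2 + s_j σ_y` with
`s_j = α_j β_j sin θ_j`. Hence, with `S₁ = ∑ μ_j s_j` and `S₂ = ∑ μ_j s_j²`, the reduced
state minus `I/4` is `(S₁/2)(σ_y ⊗ 1 + 1 ⊗ σ_y) + S₂ σ_y ⊗ σ_y`. This operator is diagonal
in the product eigenbasis of `σ_y`, with eigenvalues `S₁ + S₂, -S₂, -S₂, S₂ - S₁`, so its
trace norm is `|S₁ + S₂| + 2|S₂| + |S₂ - S₁| ≥ 4 S₂` by the triangle inequality.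
-/

open scoped MatrixOrder in
theorem traceNorm_eq_re_trace_of_mul_self_eq {m : Type*} [Fintype m] [DecidableEq m]
    {A B : Matrix m m ℂ} (hB : B.PosSemidef) (hsq : B * B = Aᴴ * A) :
    traceNorm A = B.trace.re := by
  have hAA := Matrix.posSemidef_conjTranspose_mul_self A
  -- `traceNorm` is the spectral formula for `CFC.sqrt (Aᴴ * A)`, which is `B` by uniqueness.
  have hsqrt : CFC.sqrt (Aᴴ * A) = B :=
    CFC.sqrt_unique hsq (Matrix.nonneg_iff_posSemidef.mpr hB)
  rw [CFC.sqrt_eq_real_sqrt _ (Matrix.nonneg_iff_posSemidef.mpr hAA), cfcₙ_eq_cfc,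
    hAA.1.cfc_eq, Matrix.IsHermitian.cfc, Unitary.conjStarAlgAut_apply] at hsqrt
  unfold traceNorm
  erw [hsqrt]

structure IsOrthogonalProjections {ι m : Type*} [Fintype m] [DecidableEq ι]
    (Q : ι → Matrix m m ℂ) : Prop where
  isHermitian : ∀ i, (Q i).IsHermitian
  mul_eq : ∀ i k, Q i * Q k = if i = k then Q i else 0

namespace IsOrthogonalProjections

variable {ι m : Type*} [DecidableEq ι] [Fintype m] {Q : ι → Matrix m m ℂ}

theorem posSemidef (hQ : IsOrthogonalProjections Q) (i : ι) : (Q i).PosSemidef := by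
  simpa [(hQ.isHermitian i).eq, hQ.mul_eq] using Matrix.posSemidef_conjTranspose_mul_self (Q i)

theorem sum_smul_mul_sum_smul [Fintype ι] (hQ : IsOrthogonalProjections Q) (a b : ι → ℝ) :
    (∑ i, a i • Q i) * (∑ i, b i • Q i) = ∑ i, (a i * b i) • Q i := by
  simp_rw [Finset.sum_mul_sum, smul_mul_smul, hQ.mul_eq, smul_ite, smul_zero,
    Finset.sum_ite_eq, Finset.mem_univ, if_true]

theorem traceNorm_sum_smul [Fintype ι] [DecidableEq m] (hQ : IsOrthogonalProjections Q)
    (c : ι → ℝ) : traceNorm (∑ i, c i • Q i) = ∑ i, |c i| * (Q i).trace.re := by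
  have hherm : (∑ i, c i • Q i)ᴴ = ∑ i, c i • Q i := by
    simp [Matrix.conjTranspose_sum, Matrix.conjTranspose_smul, (hQ.isHermitian _).eq]
  have habs : (∑ i, |c i| • Q i).PosSemidef :=
    Matrix.posSemidef_sum _ fun i _ => (hQ.posSemidef i).smul (abs_nonneg (c i))
  rw [traceNorm_eq_re_trace_of_mul_self_eq habs (by
    rw [hherm, hQ.sum_smul_mul_sum_smul, hQ.sum_smul_mul_sum_smul]
    simp_rw [abs_mul_abs_self])]
  simp [Matrix.trace_sum, Matrix.trace_smul]

theorem kronecker {κ n : Type*} [DecidableEq κ] [Fintype n] {P : κ → Matrix n n ℂ}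
    (hQ : IsOrthogonalProjections Q) (hP : IsOrthogonalProjections P) :
    IsOrthogonalProjections fun x : ι × κ => Q x.1 ⊗ₖ P x.2 where
  isHermitian x := by
    simp [Matrix.IsHermitian, Matrix.conjTranspose_kronecker, (hQ.isHermitian _).eq,
      (hP.isHermitian _).eq]
  mul_eq x y := by
    rw [← Matrix.mul_kronecker_mul, hQ.mul_eq, hP.mul_eq]
    by_cases h₁ : x.1 = y.1 <;> by_cases h₂ : x.2 = y.2 <;> simp [h₁, h₂, Prod.ext_iff]

end IsOrthogonalProjections

section Involution

variable {n : Type*} [DecidableEq n]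

-- The projections onto the `±1` eigenspaces of an involution `U`, signed by `involutionSign`.
noncomputable def involutionProj (U : Matrix n n ℂ) : Fin 2 → Matrix n n ℂ :=
  ![(1 / 2 : ℝ) • (1 + U), (1 / 2 : ℝ) • (1 - U)]

def involutionSign : Fin 2 → ℝ := ![1, -1]

theorem isOrthogonalProjections_involutionProj [Fintype n] {U : Matrix n n ℂ}
    (hU : U.IsHermitian) (hUU : U * U = 1) : IsOrthogonalProjections (involutionProj U) where
  isHermitian i := by
    fin_cases i <;> simp [involutionProj, Matrix.IsHermitian, Matrix.conjTranspose_smul, hU.eq]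
  mul_eq i k := by
    fin_cases i <;> fin_cases k <;>
      simp [involutionProj, Matrix.mul_add, Matrix.add_mul, Matrix.mul_sub, Matrix.sub_mul,
        smul_smul, hUU] <;> module

theorem sum_involutionProj (U : Matrix n n ℂ) : ∑ i, involutionProj U i = 1 := by
  simp [Fin.sum_univ_two, involutionProj]
  module

theorem sum_involutionSign_smul_involutionProj (U : Matrix n n ℂ) :
    ∑ i, involutionSign i • involutionProj U i = U := by
  simp [Fin.sum_univ_two, involutionProj, involutionSign]
  module

theorem trace_involutionProj [Fintype n] {U : Matrix n n ℂ} (hU : U.trace = 0) (i : Fin 2) :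
    (involutionProj U i).trace = (Fintype.card n / 2 : ℂ) := by
  fin_cases i <;> simp [involutionProj, Matrix.trace_add, Matrix.trace_sub, hU] <;> ring

theorem smul_kronecker_add_smul_kronecker_eq_sum (U : Matrix n n ℂ) (a b : ℝ) :
    a • (U ⊗ₖ 1 + 1 ⊗ₖ U) + b • (U ⊗ₖ U) = ∑ x : Fin 2 × Fin 2,
      (a * (involutionSign x.1 + involutionSign x.2)
          + b * (involutionSign x.1 * involutionSign x.2))
        • (involutionProj U x.1 ⊗ₖ involutionProj U x.2) := by
  conv_lhs => rw [← sum_involutionSign_smul_involutionProj U, ← sum_involutionProj U]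
  simp only [Fintype.sum_prod_type, Fin.sum_univ_two, Matrix.add_kronecker,
    Matrix.kronecker_add, Matrix.smul_kronecker, Matrix.kronecker_smul, involutionSign]
  simp
  module

end Involution

noncomputable def pauliY : Matrix (Fin 2) (Fin 2) ℂ := !![0, -Complex.I; Complex.I, 0]

theorem pauliY_isHermitian : pauliY.IsHermitian := by
  ext i j; fin_cases i <;> fin_cases j <;> simp [pauliY]

theorem pauliY_mul_self : pauliY * pauliY = 1 := by
  ext i j; fin_cases i <;> fin_cases j <;> simp [pauliY, Matrix.mul_apply, Fin.sum_univ_two]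

theorem trace_pauliY : pauliY.trace = 0 := by
  simp [pauliY, Matrix.trace, Fin.sum_univ_two]

theorem traceNorm_pauliY_kronecker (a b : ℝ) :
    traceNorm (a • (pauliY ⊗ₖ 1 + 1 ⊗ₖ pauliY) + b • (pauliY ⊗ₖ pauliY))
      = |2 * a + b| + 2 * |b| + |b - 2 * a| := by
  have hP := isOrthogonalProjections_involutionProj pauliY_isHermitian pauliY_mul_self
  rw [smul_kronecker_add_smul_kronecker_eq_sum, (hP.kronecker hP).traceNorm_sum_smul]
  simp [Fintype.sum_prod_type, Fin.sum_univ_two, Matrix.trace_kronecker,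
    trace_involutionProj trace_pauliY, involutionSign]
  rw [show a * (1 + 1) + b = 2 * a + b by ring, show a * (-1 + -1) + b = b - 2 * a by ring]
  ring

def traceRight {m n R : Type*} [Fintype n] [AddCommMonoid R] (A : Matrix (m × n) (m × n) R) :
    Matrix m m R :=
  fun i k => ∑ u, A (i, u) (k, u)

theorem reduce_kronecker (A B : Matrix (Fin 2 × Fin 2) (Fin 2 × Fin 2) ℂ) :
    reduce (A ⊗ₖ B) = traceRight A ⊗ₖ traceRight B := by
  ext p q
  simp only [reduce, traceRight, Matrix.kroneckerMap_apply, Finset.sum_mul_sum]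

theorem reduce_sum_smul {J : Type*} [Fintype J] (c : J → ℝ)
    (M : J → Matrix ((Fin 2 × Fin 2) × (Fin 2 × Fin 2))
      ((Fin 2 × Fin 2) × (Fin 2 × Fin 2)) ℂ) :
    reduce (∑ j, c j • M j) = ∑ j, c j • reduce (M j) := by
  ext p q
  simp only [reduce, Matrix.sum_apply, Matrix.smul_apply, Finset.smul_sum]
  exact (Finset.sum_congr rfl fun _ _ => Finset.sum_comm).trans Finset.sum_comm

theorem traceRight_vecMulVec_bell {a b t : ℝ} (hab : a ^ 2 + b ^ 2 = 1) :
    let ζ := (a : ℂ) • PhiMinus + ((b : ℂ) * Complex.exp ((t : ℂ) * Complex.I)) • PsiPlus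
    traceRight (Matrix.vecMulVec ζ (star ζ))
      = (1 / 2 : ℝ) • (1 : Matrix (Fin 2) (Fin 2) ℂ) + (a * b * Real.sin t) • pauliY := by
  intro ζ
  ext i k
  fin_cases i <;> fin_cases k <;>
    simp [ζ, traceRight, Matrix.vecMulVec_apply, PhiMinus, PsiPlus, ket, pauliY,
      Fin.sum_univ_two, Complex.exp_mul_I, Complex.ext_iff, Prod.ext_iff, Complex.conj_ofReal,
      ← Complex.ofReal_cos, ← Complex.ofReal_sin] <;>
    field_simp <;>
    simp [Real.cos_sq_add_sin_sq, add_comm (b ^ 2), hab] <;>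
    ring

theorem sum_smul_kronecker_self {J n : Type*} [Fintype J] [DecidableEq n] (μ s : J → ℝ)
    (hμ : ∑ j, μ j = 1) (U : Matrix n n ℂ) :
    ∑ j, μ j • (((1 / 2 : ℝ) • 1 + s j • U) ⊗ₖ ((1 / 2 : ℝ) • 1 + s j • U))
      = (1 / 4 : ℂ) • (1 : Matrix (n × n) (n × n) ℂ)
        + ((∑ j, μ j * s j) / 2) • (U ⊗ₖ 1 + 1 ⊗ₖ U) + (∑ j, μ j * s j ^ 2) • (U ⊗ₖ U) := by
  have hterm : ∀ j, μ j • (((1 / 2 : ℝ) • 1 + s j • U) ⊗ₖ ((1 / 2 : ℝ) • 1 + s j • U))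
      = (μ j / 4) • (1 : Matrix (n × n) (n × n) ℂ)
        + (μ j * s j / 2) • (U ⊗ₖ 1 + 1 ⊗ₖ U) + (μ j * s j ^ 2) • (U ⊗ₖ U) := by
    intro j
    simp only [Matrix.add_kronecker, Matrix.kronecker_add, Matrix.smul_kronecker,
      Matrix.kronecker_smul, ← Matrix.one_kronecker_one]
    module
  simp only [hterm, Finset.sum_add_distrib, ← Finset.sum_smul, ← Finset.sum_div, hμ]
  module

theorem stmt15_general {J : Type*} [Fintype J] (μ α β θ : J → ℝ)
    (hμ1 : ∑ j, μ j = 1)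
    (hαβ : ∀ j, α j ^ 2 + β j ^ 2 = 1)
    (ζ : J → (Fin 2 × Fin 2 → ℂ))
    (hζ : ∀ j, ζ j = (α j : ℂ) • PhiMinus
        + ((β j : ℂ) * Complex.exp ((θ j : ℂ) * Complex.I)) • PsiPlus)
    (ρ : Matrix ((Fin 2 × Fin 2) × (Fin 2 × Fin 2)) ((Fin 2 × Fin 2) × (Fin 2 × Fin 2)) ℂ)
    (hρ : ρ = ∑ j, μ j • (Matrix.vecMulVec (ζ j) (star (ζ j)) ⊗ₖ
        Matrix.vecMulVec (ζ j) (star (ζ j)))) :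
    2 * ∑ j, μ j * α j ^ 2 * β j ^ 2 * Real.sin (θ j) ^ 2
      ≤ traceDist (reduce ρ) ((1 / 4 : ℂ) • 1) := by
  set s : J → ℝ := fun j => α j * β j * Real.sin (θ j)
  set S₁ := ∑ j, μ j * s j
  set S₂ := ∑ j, μ j * s j ^ 2
  have hreduce : reduce ρ - (1 / 4 : ℂ) • 1
      = (S₁ / 2) • (pauliY ⊗ₖ 1 + 1 ⊗ₖ pauliY) + S₂ • (pauliY ⊗ₖ pauliY) := by
    have hmarg : ∀ j, traceRight (Matrix.vecMulVec (ζ j) (star (ζ j)))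
        = (1 / 2 : ℝ) • 1 + s j • pauliY := fun j => by
      rw [hζ j]
      exact traceRight_vecMulVec_bell (hαβ j)
    simp only [hρ, reduce_sum_smul, reduce_kronecker, hmarg, sum_smul_kronecker_self μ s hμ1]
    abel
  have hS₂ : ∑ j, μ j * α j ^ 2 * β j ^ 2 * Real.sin (θ j) ^ 2 = S₂ :=
    Finset.sum_congr rfl fun j _ => by ring
  rw [traceDist, hreduce, traceNorm_pauliY_kronecker, hS₂]
  have htri := abs_add_le (2 * (S₁ / 2) + S₂) (S₂ - 2 * (S₁ / 2))
  linarith [le_abs_self (2 * (S₁ / 2) + S₂ + (S₂ - 2 * (S₁ / 2))), le_abs_self S₂]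

/-- For `ρ = ∑_j μ_j (|ζ_j⟩⟨ζ_j|)^{⊗2}` with
`|ζ_j⟩ = α_j|Φ⁻⟩ + β_j e^{iθ_j}|Ψ⁺⟩`, the trace distance between the reduced
state of `ρ` on `(S₁, S₂)` and `(I/2)^{⊗2}` is at least
`2 ∑_j μ_j α_j² β_j² sin²θ_j`. -/
theorem stmt15 {J : Type*} [Fintype J] (μ α β θ : J → ℝ)
    (hμ0 : ∀ j, 0 ≤ μ j) (hμ1 : ∑ j, μ j = 1)
    (hα : ∀ j, α j ∈ Set.Icc (0 : ℝ) 1) (hβ : ∀ j, β j ∈ Set.Icc (0 : ℝ) 1)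
    (hαβ : ∀ j, α j ^ 2 + β j ^ 2 = 1) (hθ : ∀ j, θ j ∈ Set.Ico 0 (2 * Real.pi))
    (ζ : J → (Fin 2 × Fin 2 → ℂ))
    (hζ : ∀ j, ζ j = (α j : ℂ) • PhiMinus
        + ((β j : ℂ) * Complex.exp ((θ j : ℂ) * Complex.I)) • PsiPlus)
    (ρ : Matrix ((Fin 2 × Fin 2) × (Fin 2 × Fin 2)) ((Fin 2 × Fin 2) × (Fin 2 × Fin 2)) ℂ)
    (hρ : ρ = ∑ j, μ j • (Matrix.vecMulVec (ζ j) (star (ζ j)) ⊗ₖ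
        Matrix.vecMulVec (ζ j) (star (ζ j)))) :
    2 * ∑ j, μ j * α j ^ 2 * β j ^ 2 * Real.sin (θ j) ^ 2
      ≤ traceDist (reduce ρ) ((1 / 4 : ℂ) • 1) :=
  stmt15_general μ α β θ hμ1 hαβ ζ hζ ρ hρ
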